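/- For every m ≥ 1, if a nonempty palindrome w is a proper prefix of E_{2,m}, then w = E_{1,n} for some n with 1 ≤ n ≤ m; likewise, if a nonempty palindrome w is a proper suffix of E_{2,m}, then w = E_{1,n} for some n with 1 ≤ n ≤ m. -/

import Mathlib

/-- The alphabet: letters a, b (for the period-doubling sequence) and c (used by Θ₂). -/
inductive Letter : Type
  | a | b | c
deriving DecidableEq, Repr

open Letter

/-- The period-doubling substitution σ : a ↦ ab, b ↦ aa, extended to words
(the extra letter c is left untouched; it is never produced). -/
def sigmaw : List Letter → List Letter :=
  fun w => w.flatMap fun x => match x with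
    | .a => [.a, .b]
    | .b => [.a, .a]
    | .c => [.c]

/-- A_m = σ^m(a). -/
def A (m : ℕ) : List Letter := sigmaw^[m] [.a]

/-- B_m = σ^m(b). -/
def B (m : ℕ) : List Letter := sigmaw^[m] [.b]

/-- δ_m, the last letter of A_m. -/
def delta (m : ℕ) : Letter := (A m).getLastD .a

/-- The period-doubling sequence D, as a function giving its (n+1)-st letter
(0-indexed); it is the fixed point of σ beginning with a, and A_{n+1} is a
prefix of it of length 2^{n+1} > n. -/
def D (n : ℕ) : Letter := (A (n + 1)).getD n .a

/-- The finite segment D[i .. i+len−1] of the period-doubling sequence,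
with 1-based starting position i. -/
def Dseg (i len : ℕ) : List Letter := (List.range len).map fun k => D (i - 1 + k)

/-- u occurs in the finite word w at (1-based) position i. -/
def OccursAt {α : Type*} (u w : List α) (i : ℕ) : Prop :=
  1 ≤ i ∧ i - 1 + u.length ≤ w.length ∧ (w.drop (i - 1)).take u.length = u

/-- u is a factor of the finite word w. -/
def IsFactor {α : Type*} (u w : List α) : Prop := ∃ i, OccursAt u w i

/-- u occurs in the period-doubling sequence D at (1-based) position i. -/
def DOccursAt (u : List Letter) (i : ℕ) : Prop := 1 ≤ i ∧ Dseg i u.length = u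

/-- u is a factor of the period-doubling sequence D. -/
def FactorD (u : List Letter) : Prop := ∃ i, DOccursAt u i

/-- L(u,p): the starting position of the p-th occurrence (p ≥ 1) of u in D. -/
noncomputable def L (u : List Letter) (p : ℕ) : ℕ := Nat.nth (DOccursAt u) (p - 1)

/-- r_p(u): the p-th return word of u (p ≥ 1), i.e. D[L(u,p) .. L(u,p+1)−1];
r_0(u) is the prefix of D preceding the first occurrence of u. -/
noncomputable def r (u : List Letter) (p : ℕ) : List Letter :=
  if p = 0 then Dseg 1 (L u 1 - 1) else Dseg (L u p) (L u (p + 1) - L u p)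

/-- The morphism τ₁ : a ↦ a, b ↦ bb, extended to words. -/
def tau1 : List Letter → List Letter :=
  fun w => w.flatMap fun x => match x with
    | .a => [.a]
    | .b => [.b, .b]
    | .c => [.c]

/-- The morphism τ₂ : a ↦ ab, b ↦ acac, extended to words. -/
def tau2 : List Letter → List Letter :=
  fun w => w.flatMap fun x => match x with
    | .a => [.a, .b]
    | .b => [.a, .c, .a, .c]
    | .c => [.c]

/-- Θ₁[p], the p-th letter (p ≥ 1) of Θ₁ = τ₁(D): since |τ₁(w)| ≥ |w|, the p-th
letter of Θ₁ is the p-th letter of the image of the length-p prefix of D. -/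
def Theta1 (p : ℕ) : Letter := (tau1 (Dseg 1 p)).getD (p - 1) .a

/-- Θ₂[p], the p-th letter (p ≥ 1) of Θ₂ = τ₂(D). -/
def Theta2 (p : ℕ) : Letter := (tau2 (Dseg 1 p)).getD (p - 1) .a

/-- The envelope word E_{1,m} = A_m with its last letter δ_m deleted. -/
def E1 (m : ℕ) : List Letter := (A m).dropLast

/-- The envelope word E_{2,m} = B_m B_{m−1} with its last letter δ_m deleted. -/
def E2 (m : ℕ) : List Letter := (B m ++ B (m - 1)).dropLast

/-- Enumeration of the envelope words in the order
E_{1,1} ⊏ E_{2,1} ⊏ E_{1,2} ⊏ E_{2,2} ⊏ …. -/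
def Eword (k : ℕ) : List Letter := if k % 2 = 0 then E1 (k / 2 + 1) else E2 (k / 2 + 1)

/-- Env(u): the ⊏-least envelope word having u as a factor. -/
noncomputable def Env (u : List Letter) : List Letter :=
  Eword (sInf {k | IsFactor u (Eword k)})

/-- The letterwise complement exchanging a and b. -/
def comp : Letter → Letter
  | .a => .b
  | .b => .a
  | .c => .c

/-!
A palindromic prefix `w` of a palindrome `u` is also a suffix of `u`, so `|u| - |w|` is a
period of `u`. Since `E2 (n+1) = E1 (n+1) δₙ E1 n` and `E1 (n+1) = E1 n δₙ E1 n`, a palindromic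
proper prefix of either word that is not some `E1 k` would give `E1 (n+1)`, the prefix of `D` of
length `2^(n+1) - 1`, a period `q` with `1 ≤ q < 2^n`. This is impossible because `D (2i) = a` and
`D (2i+1) = comp (D i)`: an even period `2r` restricts on the odd positions to a period `r` of a
prefix half as long, and an odd period is refuted at position `0` or `2`, since
`D 0 = D 2 = a` while `D (4s+1) = b`.
-/
namespace List

variable {α : Type*} {u w : List α}

theorem hasPeriod_of_isPrefix_of_isSuffix (hp : w <+: u) (hs : w <:+ u) :
    u.HasPeriod (u.length - w.length) := by
  rw [HasPeriod]
  nth_rw 1 [← take_append_drop (u.length - w.length) u]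
  rwa [prefix_append_right_inj, ← suffix_iff_eq_drop.1 hs]

theorem isPrefix_iff_isSuffix_of_reverse_eq (hu : u.reverse = u) (hw : w.reverse = w) :
    w <+: u ↔ w <:+ u := by
  rw [← reverse_suffix, hu, hw]

end List

theorem sigmaw_append (u v : List Letter) : sigmaw (u ++ v) = sigmaw u ++ sigmaw v :=
  List.flatMap_append

theorem sigmaw_iterate_append (n : ℕ) (u v : List Letter) :
    sigmaw^[n] (u ++ v) = sigmaw^[n] u ++ sigmaw^[n] v := by
  induction n generalizing u v with
  | zero => rfl
  | succ n ih => rw [Function.iterate_succ_apply, sigmaw_append, ih]; rfl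

theorem A_succ_eq_sigmaw (n : ℕ) : A (n + 1) = sigmaw (A n) :=
  Function.iterate_succ_apply' _ _ _

theorem A_succ (n : ℕ) : A (n + 1) = A n ++ B n :=
  (Function.iterate_succ_apply _ _ _).trans (sigmaw_iterate_append n [a] [b])

theorem B_succ (n : ℕ) : B (n + 1) = A n ++ A n :=
  (Function.iterate_succ_apply _ _ _).trans (sigmaw_iterate_append n [a] [a])

theorem length_B (n : ℕ) : (B n).length = (A n).length := by
  induction n with
  | zero => rfl
  | succ n ih => simp [A_succ, B_succ, ih]

theorem length_A (n : ℕ) : (A n).length = 2 ^ n := by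
  induction n with
  | zero => rfl
  | succ n ih => rw [A_succ, List.length_append, length_B, ih, pow_succ, mul_two]

theorem A_ne_nil (n : ℕ) : A n ≠ [] :=
  List.ne_nil_of_length_pos (by rw [length_A]; positivity)

theorem B_ne_nil (n : ℕ) : B n ≠ [] :=
  List.ne_nil_of_length_pos (by rw [length_B, length_A]; positivity)

theorem dropLast_B (n : ℕ) : (B n).dropLast = E1 n := by
  induction n with
  | zero => rfl
  | succ n ih =>
    rw [E1, A_succ, B_succ, List.dropLast_append_of_ne_nil (A_ne_nil n),
      List.dropLast_append_of_ne_nil (B_ne_nil n), ih, E1]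

theorem A_eq_E1_append (n : ℕ) : A n = E1 n ++ [delta n] := by
  rw [E1, delta, List.getLastD_eq_getLast?, List.getLast?_eq_some_getLast (A_ne_nil n),
    Option.getD_some, List.dropLast_concat_getLast]

theorem E1_succ (n : ℕ) : E1 (n + 1) = E1 n ++ [delta n] ++ E1 n := by
  calc E1 (n + 1) = (A n ++ B n).dropLast := by rw [E1, A_succ]
    _ = A n ++ E1 n := by rw [List.dropLast_append_of_ne_nil (B_ne_nil n), dropLast_B]
    _ = E1 n ++ [delta n] ++ E1 n := by rw [A_eq_E1_append]

theorem E2_succ (n : ℕ) : E2 (n + 1) = E1 (n + 1) ++ [delta n] ++ E1 n := by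
  rw [E2, Nat.add_sub_cancel, List.dropLast_append_of_ne_nil (B_ne_nil n), dropLast_B, B_succ,
    E1_succ, A_eq_E1_append]
  simp only [List.append_assoc]

theorem reverse_E1 (n : ℕ) : (E1 n).reverse = E1 n := by
  induction n with
  | zero => rfl
  | succ n ih => simp [E1_succ, ih]

theorem reverse_E2_succ (n : ℕ) : (E2 (n + 1)).reverse = E2 (n + 1) := by
  simp [E2_succ, E1_succ, reverse_E1]

theorem length_E1 (n : ℕ) : (E1 n).length = 2 ^ n - 1 := by
  rw [E1, List.length_dropLast, length_A]

theorem length_E2_succ (n : ℕ) : (E2 (n + 1)).length = 2 ^ (n + 1) + 2 ^ n - 1 := by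
  have := Nat.one_le_two_pow (n := n)
  simp only [E2_succ, List.length_append, List.length_singleton, length_E1, pow_succ]
  omega

theorem E1_prefix_E1_succ (n : ℕ) : E1 n <+: E1 (n + 1) := by
  rw [E1_succ, List.append_assoc]; exact List.prefix_append _ _

theorem E1_succ_prefix_E2_succ (n : ℕ) : E1 (n + 1) <+: E2 (n + 1) := by
  rw [E2_succ, List.append_assoc]; exact List.prefix_append _ _

theorem A_prefix_A {m k : ℕ} (h : m ≤ k) : A m <+: A k := by
  induction k, h using Nat.le_induction with
  | base => exact List.prefix_refl _
  | succ k _ ih => exact ih.trans (A_succ k ▸ List.prefix_append _ _)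

theorem c_not_mem_A (n : ℕ) : c ∉ A n := by
  induction n with
  | zero => simp [A]
  | succ n ih =>
    rw [A_succ_eq_sigmaw, sigmaw, List.mem_flatMap]
    rintro ⟨x, hx, hcx⟩
    cases x <;> simp_all

theorem sigmaw_cons_of_ne_c {x : Letter} (hx : x ≠ c) (t : List Letter) :
    sigmaw (x :: t) = a :: comp x :: sigmaw t := by
  cases x <;> simp_all [sigmaw, comp]

theorem getElem?_sigmaw_two_mul {w : List Letter} (hw : c ∉ w) (k : ℕ) :
    (sigmaw w)[2 * k]? = w[k]?.map fun _ => a := by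
  induction w generalizing k with
  | nil => rfl
  | cons x t ih =>
    rw [List.mem_cons, not_or] at hw
    rw [sigmaw_cons_of_ne_c (Ne.symm hw.1)]
    cases k with
    | zero => rfl
    | succ k => simpa [Nat.mul_succ] using ih hw.2 k

theorem getElem?_sigmaw_two_mul_add_one {w : List Letter} (hw : c ∉ w) (k : ℕ) :
    (sigmaw w)[2 * k + 1]? = w[k]?.map comp := by
  induction w generalizing k with
  | nil => rfl
  | cons x t ih =>
    rw [List.mem_cons, not_or] at hw
    rw [sigmaw_cons_of_ne_c (Ne.symm hw.1)]
    cases k with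
    | zero => rfl
    | succ k => simpa [Nat.mul_succ] using ih hw.2 k

theorem getElem?_A_of_le {k l i : ℕ} (hkl : k ≤ l) (hi : i < 2 ^ k) :
    (A l)[i]? = (A k)[i]? := by
  obtain ⟨t, ht⟩ := A_prefix_A hkl
  rw [← ht, List.getElem?_append_left (by rwa [length_A])]

theorem getElem?_A {m i : ℕ} (hi : i < 2 ^ m) : (A m)[i]? = some (D i) := by
  have hi' : i < 2 ^ (i + 1) := (Nat.lt_succ_self i).trans Nat.lt_two_pow_self
  rw [← getElem?_A_of_le (le_max_left m (i + 1)) hi, getElem?_A_of_le (le_max_right m (i + 1)) hi',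
    D, List.getD_eq_getElem?_getD, List.getElem?_eq_getElem (by rwa [length_A]), Option.getD_some]

theorem D_two_mul (k : ℕ) : D (2 * k) = a := by
  have hk : k < 2 ^ k := Nat.lt_two_pow_self
  have h := getElem?_A (m := k + 1) (i := 2 * k) (by rw [pow_succ]; omega)
  rw [A_succ_eq_sigmaw, getElem?_sigmaw_two_mul (c_not_mem_A k), getElem?_A hk] at h
  exact (Option.some_inj.1 h).symm

theorem D_two_mul_add_one (k : ℕ) : D (2 * k + 1) = comp (D k) := by
  have hk : k < 2 ^ k := Nat.lt_two_pow_self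
  have h := getElem?_A (m := k + 1) (i := 2 * k + 1) (by rw [pow_succ]; omega)
  rw [A_succ_eq_sigmaw, getElem?_sigmaw_two_mul_add_one (c_not_mem_A k), getElem?_A hk] at h
  exact (Option.some_inj.1 h).symm

theorem D_four_mul_add_one (s : ℕ) : D (4 * s + 1) = b := by
  rw [show 4 * s + 1 = 2 * (2 * s) + 1 by ring, D_two_mul_add_one, D_two_mul]; rfl

theorem comp_injective : Function.Injective comp := by
  intro x y h
  cases x <;> cases y <;> first | rfl | cases h

theorem exists_D_ne_D_add {j q : ℕ} (hq : 1 ≤ q) (hqj : q < 2 ^ j) :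
    ∃ i, i + q < 2 ^ (j + 1) - 1 ∧ D i ≠ D (i + q) := by
  induction j generalizing q with
  | zero => omega
  | succ j ih =>
    have hpow : 2 ^ (j + 2) = 2 * 2 ^ (j + 1) := pow_succ' 2 (j + 1)
    obtain ⟨r, rfl | rfl⟩ := Nat.even_or_odd' q
    · obtain ⟨i, hi, hne⟩ := ih (q := r) (by omega) (by rw [pow_succ] at hqj; omega)
      refine ⟨2 * i + 1, by omega, ?_⟩
      rw [show 2 * i + 1 + 2 * r = 2 * (i + r) + 1 by ring, D_two_mul_add_one, D_two_mul_add_one]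
      exact comp_injective.ne hne
    · obtain ⟨s, rfl | rfl⟩ := Nat.even_or_odd' r
      · refine ⟨0, by omega, ?_⟩
        rw [zero_add, show 2 * (2 * s) + 1 = 4 * s + 1 by ring, show D 0 = a from D_two_mul 0,
          D_four_mul_add_one]
        decide
      · refine ⟨2, by omega, ?_⟩
        rw [show 2 + (2 * (2 * s + 1) + 1) = 4 * (s + 1) + 1 by ring, D_four_mul_add_one,
          show D 2 = a from D_two_mul 1]
        decide

theorem getElem?_E1 {m i : ℕ} (hi : i < 2 ^ m - 1) : (E1 m)[i]? = some (D i) := by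
  rw [E1, List.getElem?_dropLast, length_A, if_pos hi, getElem?_A (by omega)]

theorem not_hasPeriod_E1_succ {j q : ℕ} (hq : 1 ≤ q) (hqj : q < 2 ^ j) :
    ¬ (E1 (j + 1)).HasPeriod q := by
  obtain ⟨i, hi, hne⟩ := exists_D_ne_D_add hq hqj
  intro hper
  have := List.hasPeriod_iff_getElem?.1 hper i (by rw [length_E1]; omega)
  rw [getElem?_E1 (by omega), getElem?_E1 hi] at this
  exact hne (Option.some_inj.1 this)

theorem exists_eq_E1_of_isPrefix_E1 {w : List Letter} (hne : w ≠ []) (hpal : w.reverse = w) :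
    ∀ {m : ℕ}, w <+: E1 m → ∃ n, 1 ≤ n ∧ n ≤ m ∧ w = E1 n
  | 0, hp => absurd (List.prefix_nil.1 hp) hne
  | m + 1, hp => by
    have hlen := hp.length_le
    rw [length_E1] at hlen
    by_cases hshort : w.length ≤ 2 ^ m - 1
    · obtain ⟨n, hn1, hnm, rfl⟩ := exists_eq_E1_of_isPrefix_E1 hne hpal
        (List.prefix_of_prefix_length_le hp (E1_prefix_E1_succ m) (by rwa [length_E1]))
      exact ⟨n, hn1, by omega, rfl⟩
    by_cases hfull : w.length = 2 ^ (m + 1) - 1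
    · exact ⟨m + 1, by omega, le_rfl, hp.eq_of_length (by rw [hfull, length_E1])⟩
    exfalso
    have hs := (List.isPrefix_iff_isSuffix_of_reverse_eq (reverse_E1 _) hpal).1 hp
    have : 2 ^ (m + 1) = 2 * 2 ^ m := pow_succ' 2 m
    refine not_hasPeriod_E1_succ ?_ ?_ (List.hasPeriod_of_isPrefix_of_isSuffix hp hs) <;>
      rw [length_E1] <;> omega

theorem length_le_of_isPrefix_E2_succ {n : ℕ} {w : List Letter} (hpal : w.reverse = w)
    (hp : w <+: E2 (n + 1)) (hproper : w ≠ E2 (n + 1)) : w.length ≤ 2 ^ (n + 1) - 1 := by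
  have hlt : w.length < (E2 (n + 1)).length := hp.length_le.lt_of_ne (mt hp.eq_of_length hproper)
  by_contra! hlong
  have hs := (List.isPrefix_iff_isSuffix_of_reverse_eq (reverse_E2_succ n) hpal).1 hp
  have hper := (List.hasPeriod_of_isPrefix_of_isSuffix hp hs).infix
    (E1_succ_prefix_E2_succ n).isInfix
  have : 2 ^ (n + 1) = 2 * 2 ^ n := pow_succ' 2 n
  refine not_hasPeriod_E1_succ ?_ ?_ hper <;> rw [length_E2_succ] at hlt ⊢ <;> omega

/-- For every m ≥ 1, every nonempty palindromic proper prefix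
(resp. proper suffix) of E_{2,m} equals E_{1,n} for some 1 ≤ n ≤ m. -/
theorem palindromic_proper_prefix_suffix_E2 (m : ℕ) (hm : 1 ≤ m) (w : List Letter)
    (hne : w ≠ []) (hpal : w.reverse = w) :
    (w <+: E2 m → w ≠ E2 m → ∃ n, 1 ≤ n ∧ n ≤ m ∧ w = E1 n) ∧
    (w <:+ E2 m → w ≠ E2 m → ∃ n, 1 ≤ n ∧ n ≤ m ∧ w = E1 n) := by
  obtain ⟨n, rfl⟩ : ∃ n, m = n + 1 := ⟨m - 1, by omega⟩
  have prefix_case (hp : w <+: E2 (n + 1)) (hproper : w ≠ E2 (n + 1)) :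
      ∃ k, 1 ≤ k ∧ k ≤ n + 1 ∧ w = E1 k :=
    exists_eq_E1_of_isPrefix_E1 hne hpal <|
      List.prefix_of_prefix_length_le hp (E1_succ_prefix_E2_succ n)
        (by rw [length_E1]; exact length_le_of_isPrefix_E2_succ hpal hp hproper)
  have palindromic_prefix_iff_suffix :=
    List.isPrefix_iff_isSuffix_of_reverse_eq (reverse_E2_succ n) hpal
  exact ⟨prefix_case, fun hs => prefix_case (palindromic_prefix_iff_suffix.2 hs)⟩
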